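/- For 0 < λ < 1, the integral ∫_0^{π/2} log(1 − λ cos²φ)/√(1 − λ cos²φ) dφ equals (K(√λ)/2)·log(1−λ), where K(k) = ∫_0^{π/2} (1 − k² sin²θ)^{-1/2} dθ. -/

import Mathlib

/-!
Write `Δ θ = 1 - l sin² θ`. The substitution `θ ↦ ψ` with `sin ψ = cos θ / √(Δ θ)` is a
decreasing bijection of `[0, π/2]` with `Δ ψ = (1 - l) / Δ θ` and
`dψ = -√(1 - l) dθ / Δ θ`, so the measure `dθ / √(Δ θ)` is invariant under
`Δ ↦ (1 - l) / Δ`. After `φ ↦ π/2 - φ` the integral is `I = ∫ log Δ / √Δ`, and the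
substitution gives `I = ∫ (log (1 - l) - log Δ) / √Δ`, that is `I = log (1 - l) K(√l) - I`.
-/

open Real

/-- The complete elliptic integral of the first kind. -/
noncomputable def K (k : ℝ) : ℝ := ∫ θ in (0:ℝ)..(π/2), 1 / Real.sqrt (1 - k^2 * Real.sin θ ^ 2)

open Set intervalIntegral

theorem integral_comp_cos_eq_integral_comp_sin {E : Type*} [NormedAddCommGroup E]
    [NormedSpace ℝ E] (f : ℝ → E) :
    ∫ x in (0:ℝ)..π / 2, f (cos x) = ∫ x in (0:ℝ)..π / 2, f (sin x) := by
  simpa [sin_pi_div_two_sub] using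
    (integral_comp_sub_left (fun x ↦ f (sin x)) (π / 2) (a := 0) (b := π / 2))

theorem one_sub_mul_sin_sq_pos {l : ℝ} (hl : l < 1) (θ : ℝ) : 0 < 1 - l * sin θ ^ 2 := by
  rcases le_or_gt 0 l with h | h
  · nlinarith [mul_le_mul_of_nonneg_left (sin_sq_le_one θ) h]
  · nlinarith [mul_nonpos_of_nonpos_of_nonneg h.le (sq_nonneg (sin θ))]

/-- If `θ = am u` is the Jacobi amplitude for the parameter `l = k²`, this is `am (K - u)`,
since `sn (K - u) = cn u / dn u`. -/
noncomputable def reflectAmplitude (l θ : ℝ) : ℝ := arcsin (cos θ / √(1 - l * sin θ ^ 2))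

theorem continuous_reflectAmplitude {l : ℝ} (hl : l < 1) : Continuous (reflectAmplitude l) :=
  continuous_arcsin.comp <| continuous_cos.div (by fun_prop)
    fun θ ↦ (sqrt_pos.2 (one_sub_mul_sin_sq_pos hl θ)).ne'

@[simp] theorem reflectAmplitude_zero (l : ℝ) : reflectAmplitude l 0 = π / 2 := by
  simp [reflectAmplitude]

@[simp] theorem reflectAmplitude_pi_div_two (l : ℝ) : reflectAmplitude l (π / 2) = 0 := by
  simp [reflectAmplitude]

theorem cos_sq_le_one_sub_mul_sin_sq {l : ℝ} (hl : l < 1) (θ : ℝ) :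
    cos θ ^ 2 ≤ 1 - l * sin θ ^ 2 := by
  nlinarith [sin_sq_add_cos_sq θ, sq_nonneg (sin θ)]

theorem sin_reflectAmplitude {l θ : ℝ} (hl : l < 1) (hθ : θ ∈ Icc 0 (π / 2)) :
    sin (reflectAmplitude l θ) = cos θ / √(1 - l * sin θ ^ 2) := by
  have hD := sqrt_pos.2 (one_sub_mul_sin_sq_pos hl θ)
  have hcos : 0 ≤ cos θ := cos_nonneg_of_mem_Icc ⟨by linarith [hθ.1, pi_pos], hθ.2⟩
  refine sin_arcsin (by linarith [div_nonneg hcos hD.le]) ?_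
  rw [div_le_one hD, ← sqrt_sq hcos]
  exact sqrt_le_sqrt (cos_sq_le_one_sub_mul_sin_sq hl θ)

theorem one_sub_mul_sin_sq_reflectAmplitude {l θ : ℝ} (hl : l < 1) (hθ : θ ∈ Icc 0 (π / 2)) :
    1 - l * sin (reflectAmplitude l θ) ^ 2 = (1 - l) / (1 - l * sin θ ^ 2) := by
  have hD := one_sub_mul_sin_sq_pos hl θ
  rw [sin_reflectAmplitude hl hθ, div_pow, sq_sqrt hD.le]
  field_simp
  linear_combination -l * sin_sq_add_cos_sq θ

theorem hasDerivAt_reflectAmplitude {l θ : ℝ} (hl : l < 1) (hθ : θ ∈ Ioo 0 (π / 2)) :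
    HasDerivAt (reflectAmplitude l) (-√(1 - l) / (1 - l * sin θ ^ 2)) θ := by
  set D := 1 - l * sin θ ^ 2 with hD_def
  have hD : 0 < D := one_sub_mul_sin_sq_pos hl θ
  have hsD : 0 < √D := sqrt_pos.2 hD
  have hsin : 0 < sin θ := sin_pos_of_pos_of_lt_pi hθ.1 (by linarith [hθ.2, pi_pos])
  have hl' : 0 < 1 - l := by linarith
  have hu : HasDerivAt (fun t ↦ cos t / √(1 - l * sin t ^ 2))
      (-(1 - l) * sin θ / (D * √D)) θ := by
    have hD' : HasDerivAt (fun t ↦ 1 - l * sin t ^ 2) (-(l * (2 * sin θ * cos θ))) θ := by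
      simpa [mul_comm] using (((hasDerivAt_sin θ).fun_pow 2).const_mul l).const_sub 1
    refine ((hasDerivAt_cos θ).div (hD'.sqrt hD.ne') hsD.ne').congr_deriv ?_
    rw [← hD_def, sq_sqrt hD.le]
    field_simp
    rw [sq_sqrt hD.le]
    linear_combination l * sin_sq_add_cos_sq θ - hD_def
  have hsqrt : √(1 - (cos θ / √D) ^ 2) = √(1 - l) * sin θ / √D := by
    rw [← sqrt_sq hsin.le, ← sqrt_mul hl'.le, ← sqrt_div' _ hD.le, div_pow, sq_sqrt hD.le]
    congr 1
    field_simp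
    linear_combination -sin_sq_add_cos_sq θ
  have hcos : 0 < cos θ := cos_pos_of_mem_Ioo ⟨by linarith [hθ.1, pi_pos], hθ.2⟩
  have hu_lt_one : cos θ / √D < 1 := by
    rw [div_lt_one hsD, ← sqrt_sq hcos.le]
    exact sqrt_lt_sqrt (sq_nonneg _)
      (by nlinarith [sin_sq_add_cos_sq θ, mul_pos hl' (pow_pos hsin 2)])
  have hu_ne_neg_one : cos θ / √D ≠ -1 := by linarith [div_pos hcos hsD]
  refine ((hasDerivAt_arcsin hu_ne_neg_one hu_lt_one.ne).comp θ hu).congr_deriv ?_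
  rw [hsqrt]
  field_simp
  rw [sq_sqrt hl'.le]

theorem integral_inv_sqrt_smul_comp_eq_comp_div {E : Type*} [NormedAddCommGroup E]
    [NormedSpace ℝ E] {l : ℝ} (hl : l < 1) (f : ℝ → E) :
    ∫ θ in (0:ℝ)..π / 2, (√(1 - l * sin θ ^ 2))⁻¹ • f (1 - l * sin θ ^ 2) =
      ∫ θ in (0:ℝ)..π / 2, (√(1 - l * sin θ ^ 2))⁻¹ • f ((1 - l) / (1 - l * sin θ ^ 2)) := by
  have hpi : (0:ℝ) ≤ π / 2 := by positivity
  have hsub := integral_deriv_smul_comp_of_deriv_nonpos (a := 0) (b := π / 2)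
    (g := fun θ ↦ (√(1 - l * sin θ ^ 2))⁻¹ • f (1 - l * sin θ ^ 2))
    (continuous_reflectAmplitude hl).continuousOn
    (fun θ hθ ↦ hasDerivAt_reflectAmplitude hl (by simpa [hpi] using hθ))
    (fun θ _ ↦ div_nonpos_of_nonpos_of_nonneg (neg_nonpos.2 (sqrt_nonneg _))
      (one_sub_mul_sin_sq_pos hl θ).le)
  rw [reflectAmplitude_zero, reflectAmplitude_pi_div_two] at hsub
  rw [integral_symm (π / 2) 0, ← hsub, ← integral_neg]
  refine integral_congr fun θ hθ ↦ ?_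
  rw [uIcc_of_le hpi] at hθ
  have hD := one_sub_mul_sin_sq_pos hl θ
  have hl' : 0 < 1 - l := by linarith
  simp only [Function.comp_apply, one_sub_mul_sin_sq_reflectAmplitude hl hθ, smul_smul,
    ← neg_smul]
  congr 1
  rw [sqrt_div hl'.le]
  field_simp
  exact sq_sqrt hD.le

theorem stmt_11 (l : ℝ) (h₀ : 0 < l) (h₁ : l < 1) :
    ∫ φ in (0:ℝ)..(π/2),
        Real.log (1 - l * Real.cos φ ^ 2) / Real.sqrt (1 - l * Real.cos φ ^ 2) =
      (K (Real.sqrt l) / 2) * Real.log (1 - l) := by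
  have hD := one_sub_mul_sin_sq_pos h₁
  have hsD : ∀ θ, √(1 - l * sin θ ^ 2) ≠ 0 := fun θ ↦ (sqrt_pos.2 (hD θ)).ne'
  rw [integral_comp_cos_eq_integral_comp_sin fun c ↦ log (1 - l * c ^ 2) / √(1 - l * c ^ 2)]
  set I := ∫ θ in (0:ℝ)..π / 2, log (1 - l * sin θ ^ 2) / √(1 - l * sin θ ^ 2)
  have hK : K √l = ∫ θ in (0:ℝ)..π / 2, 1 / √(1 - l * sin θ ^ 2) := by
    simp only [K, sq_sqrt h₀.le]
  have hreflect : I = ∫ θ in (0:ℝ)..π / 2, (log (1 - l) * (1 / √(1 - l * sin θ ^ 2)) -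
      log (1 - l * sin θ ^ 2) / √(1 - l * sin θ ^ 2)) := by
    convert integral_inv_sqrt_smul_comp_eq_comp_div h₁ log using 1
    · simp only [I, smul_eq_mul, inv_mul_eq_div]
    · refine integral_congr fun θ _ ↦ ?_
      simp only [smul_eq_mul, log_div (by linarith : 1 - l ≠ 0) (hD θ).ne']
      ring
  have hint : IntervalIntegrable (fun θ ↦ log (1 - l * sin θ ^ 2) / √(1 - l * sin θ ^ 2))
      MeasureTheory.volume 0 (π / 2) := by
    refine Continuous.intervalIntegrable ?_ _ _
    exact ((by fun_prop : Continuous fun θ ↦ 1 - l * sin θ ^ 2).log fun θ ↦ (hD θ).ne').div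
      (by fun_prop) hsD
  have hintK : IntervalIntegrable (fun θ ↦ 1 / √(1 - l * sin θ ^ 2))
      MeasureTheory.volume 0 (π / 2) := by
    refine Continuous.intervalIntegrable ?_ _ _
    exact continuous_const.div (by fun_prop) hsD
  rw [integral_sub (hintK.const_mul _) hint, integral_const_mul, ← hK] at hreflect
  linarith
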